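/- Let L be a finite G-lattice with maximum element ⊤, and let x ∈ L. Then the set {y ∈ L : the pair (y, ⊤) belongs to ⌊x → ⊤⌋} equals the set {⋀_{g ∈ S} g·x : S ⊆ G}, where the meet over the empty subset S = ∅ is ⊤. -/

import Mathlib

/-!
The arrows `g • x → ⊤` lie in `⌊x → ⊤⌋` by `G`-invariance; restricting them along each other
and composing gives `⋀_{g ∈ S} g • x → ⊤`. Conversely, declaring `a → b` whenever `a ≤ b` and
`a = b ⊓ ⋀_{g ∈ S} g • x` for some `S ⊆ G` already defines a transfer system containing `x → ⊤`
(translation is handled by `g • ⋀_{h ∈ S} h • x = ⋀_{h ∈ gS} h • x`), so it contains `⌊x → ⊤⌋`.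
-/

/-- A transfer system on a `G`-lattice `L`: a partial order refining `≤`,
closed under the `G`-action and under restriction. -/
structure TransferSystem (G L : Type*) [Group G] [Lattice L] [MulAction G L] : Type _ where
  rel : L → L → Prop
  refl : ∀ x, rel x x
  trans : ∀ {x y z}, rel x y → rel y z → rel x z
  le_of_rel : ∀ {x y}, rel x y → x ≤ y
  smul_rel : ∀ (g : G) {x y}, rel x y → rel (g • x) (g • y)
  restrict : ∀ {x y x'}, rel x y → x' ≤ y → rel (x ⊓ x') x'

namespace TransferSystem

variable {G L : Type*} [Group G] [Lattice L] [MulAction G L]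
  [CovariantClass G L (· • ·) (· ≤ ·)]

theorem ext' {S T : TransferSystem G L} (h : S.rel = T.rel) : S = T := by
  cases S; cases T; simpa using h

instance : PartialOrder (TransferSystem G L) where
  le S T := ∀ ⦃x y : L⦄, S.rel x y → T.rel x y
  le_refl S := fun _ _ h => h
  le_trans S T U h1 h2 := fun _ _ h => h2 (h1 h)
  le_antisymm S T h1 h2 :=
    ext' (by funext x y; exact propext ⟨fun h => h1 h, fun h => h2 h⟩)

lemma smul_mono' (g : G) {x y : L} (h : x ≤ y) : g • x ≤ g • y :=
  CovariantClass.elim g h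

/-- The intersection of a set of transfer systems. -/
def sInfTS (s : Set (TransferSystem G L)) : TransferSystem G L where
  rel x y := x ≤ y ∧ ∀ T ∈ s, T.rel x y
  refl x := ⟨le_refl x, fun T _ => T.refl x⟩
  trans h1 h2 := ⟨h1.1.trans h2.1, fun T hT => T.trans (h1.2 T hT) (h2.2 T hT)⟩
  le_of_rel h := h.1
  smul_rel g _ _ h := ⟨smul_mono' g h.1, fun T hT => T.smul_rel g (h.2 T hT)⟩
  restrict h hle := ⟨inf_le_right, fun T hT => T.restrict (h.2 T hT) hle⟩

instance : InfSet (TransferSystem G L) := ⟨sInfTS⟩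

theorem sInf_rel (s : Set (TransferSystem G L)) (x y : L) :
    (sInf s).rel x y ↔ x ≤ y ∧ ∀ T ∈ s, T.rel x y := Iff.rfl

/-- The lattice of transfer systems, ordered by refinement. -/
instance : CompleteLattice (TransferSystem G L) :=
  completeLatticeOfInf _ (fun s =>
    ⟨fun T hT _ _ h => h.2 T hT,
     fun T hT _ _ h => ((sInf_rel s _ _).2 ⟨T.le_of_rel h, fun S hS => hT hS h⟩)⟩)

/-- `⌊x → y⌋`, the smallest transfer system containing the pair `(x, y)`. -/
def gen (x y : L) : TransferSystem G L := sInf {T : TransferSystem G L | T.rel x y}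

end TransferSystem

section GLattice

variable {G L : Type*} [Group G] [Lattice L] [MulAction G L]
  [CovariantClass G L (· • ·) (· ≤ ·)]

def smulOrderIso (g : G) : L ≃o L where
  toEquiv := MulAction.toPerm g
  map_rel_iff' := ⟨fun h => by simpa using smul_le_smul_left g⁻¹ h, smul_le_smul_left g⟩

@[simp]
lemma smulOrderIso_apply (g : G) (a : L) : smulOrderIso g a = g • a := rfl

lemma smul_inf (g : G) (a b : L) : g • (a ⊓ b) = g • a ⊓ g • b :=
  (smulOrderIso g).map_inf a b

lemma smul_top [OrderTop L] (g : G) : g • (⊤ : L) = ⊤ :=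
  (smulOrderIso g).map_top

lemma smul_finset_inf_smul [OrderTop L] [DecidableEq G] (g : G) (x : L) (S : Finset G) :
    g • S.inf (· • x) = (S.image (g * ·)).inf (· • x) := by
  rw [← smulOrderIso_apply, map_finset_inf, Finset.inf_image]
  simp only [Function.comp_def, smulOrderIso_apply, mul_smul]

namespace TransferSystem

lemma rel_gen {x y : L} (h : x ≤ y) : (gen (G := G) x y).rel x y :=
  (sInf_rel _ x y).2 ⟨h, fun _ hT => hT⟩

variable [OrderTop L]

lemma rel_smul_top (T : TransferSystem G L) {x : L} (h : T.rel x ⊤) (g : G) :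
    T.rel (g • x) ⊤ := by
  simpa only [smul_top] using T.smul_rel g h

lemma rel_finset_inf_smul_top (T : TransferSystem G L) {x : L} (h : T.rel x ⊤) (S : Finset G) :
    T.rel (S.inf (· • x)) ⊤ := by
  classical
  induction S using Finset.induction_on with
  | empty => exact T.refl ⊤
  | insert g S _ ih =>
    rw [Finset.inf_insert]
    exact T.trans (T.restrict (T.rel_smul_top h g) le_top) ih

def ofOrbitMeets (x : L) : TransferSystem G L where
  rel a b := a ≤ b ∧ ∃ S : Finset G, a = b ⊓ S.inf (· • x)
  refl a := ⟨le_rfl, ∅, by simp⟩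
  trans := by
    rintro a b c ⟨hab, S₁, rfl⟩ ⟨hbc, S₂, rfl⟩
    classical
    exact ⟨hab.trans hbc, S₂ ∪ S₁, by rw [Finset.inf_union, inf_assoc]⟩
  le_of_rel h := h.1
  smul_rel := by
    rintro g a b ⟨hab, S, rfl⟩
    classical
    exact ⟨smul_le_smul_left g hab, S.image (g * ·), by rw [smul_inf, smul_finset_inf_smul]⟩
  restrict := by
    rintro a b a' ⟨-, S, rfl⟩ hle
    refine ⟨inf_le_right, S, ?_⟩
    rw [inf_right_comm, inf_eq_right.2 hle, inf_comm]

lemma gen_le_ofOrbitMeets (x : L) : gen (G := G) x ⊤ ≤ ofOrbitMeets x :=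
  sInf_le ⟨le_top, {1}, by simp⟩

end TransferSystem

end GLattice

theorem gen_top_sources_general {G L : Type*} [Group G] [Lattice L] [OrderTop L]
    [MulAction G L] [CovariantClass G L (· • ·) (· ≤ ·)] (x : L) :
    {y : L | (TransferSystem.gen (G := G) x ⊤).rel y ⊤} =
      {y : L | ∃ S : Finset G, y = S.inf (fun g => g • x)} := by
  ext y
  refine ⟨fun hy => ?_, ?_⟩
  · obtain ⟨-, S, hS⟩ := TransferSystem.gen_le_ofOrbitMeets x hy
    exact ⟨S, by simpa using hS⟩
  · rintro ⟨S, rfl⟩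
    exact (TransferSystem.gen x ⊤).rel_finset_inf_smul_top (TransferSystem.rel_gen le_top) S

/-- In a finite `G`-lattice with maximum element `⊤`, the sources of the
arrows into `⊤` in `⌊x → ⊤⌋` are exactly the meets `⋀_{g ∈ S} g • x` over subsets `S ⊆ G`
(the empty meet being `⊤`). -/
theorem gen_top_sources {G L : Type*} [Group G] [Finite G] [Lattice L] [OrderTop L]
    [Finite L] [MulAction G L] [CovariantClass G L (· • ·) (· ≤ ·)] (x : L) :
    {y : L | (TransferSystem.gen (G := G) x ⊤).rel y ⊤} =
      {y : L | ∃ S : Finset G, y = S.inf (fun g => g • x)} :=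
  gen_top_sources_general x
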